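/- Let K/K₀ be a quadratic field extension and L/K a finite cyclic extension such that L/K₀ is a dihedral Galois extension. Let σ be a generator of Gal(L/K), τ₁ an automorphism of L of order 2 with στ₁ = τ₁σ^{-1}, τ₂ = στ₁, and L₁ = L^{τ₁}. If a ∈ L* satisfies σ(a)a^{-1} = b·τ₂(b)^{-1} for some b ∈ L*, then a ∈ K*·L₁*. -/

import Mathlib

set_option synthInstance.maxHeartbeats 1000000
set_option maxHeartbeats 4000000

open scoped TensorProduct

noncomputable section

/-- `A` is a central simple algebra over the field `K`. -/
def IsCSA (K A : Type*) [Field K] [Ring A] [Algebra K A] : Prop :=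
  Subalgebra.center K A = ⊥ ∧ IsSimpleRing A ∧ FiniteDimensional K A

/-- `A` is a split central simple algebra over `K`, i.e. a matrix algebra. -/
def IsSplitCSA (K A : Type*) [Field K] [Ring A] [Algebra K A] : Prop :=
  ∃ n : ℕ, 0 < n ∧ Nonempty (A ≃ₐ[K] Matrix (Fin n) (Fin n) K)

/-- Brauer equivalence of algebras over a field `K`. -/
def BrauerEquivalent (K A B : Type*) [Field K] [Ring A] [Algebra K A] [Ring B] [Algebra K B] :
    Prop :=
  ∃ n m : ℕ, 0 < n ∧ 0 < m ∧
    Nonempty ((Matrix (Fin n) (Fin n) A) ≃ₐ[K] Matrix (Fin m) (Fin m) B)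

/-- the `n`-th tensor power of an algebra. -/
def tensorPow (K : Type u) [Field K] (A : AlgCat.{u} K) : ℕ → AlgCat.{u} K
  | 0 => AlgCat.of K K
  | n+1 => AlgCat.of K (A ⊗[K] (tensorPow K A n))

/-- The period (exponent) of a central simple algebra: the least `n > 0` such that the
`n`-th tensor power of `A` is split. -/
def brauerPeriod (K : Type u) [Field K] (A : Type u) [Ring A] [Algebra K A] : ℕ :=
  sInf {n | 0 < n ∧ IsSplitCSA K (tensorPow K (AlgCat.of K A) n)}

/-- `n` is coprime to the characteristic of `κ` (no condition in characteristic zero). -/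
def CoprimeToChar (κ : Type*) [CommRing κ] (n : ℕ) : Prop :=
  ∀ p : ℕ, p.Prime → (p : κ) = 0 → ¬ p ∣ n

/-- full system of `m × m` matrix units in `A`, i.e. `A ≅ Mₘ(B)` for some `B`. -/
def HasMatrixUnits (A : Type*) [Ring A] (m : ℕ) : Prop :=
  ∃ e : Fin m → Fin m → A, (∑ i, e i i = 1) ∧
    ∀ i j k l, e i j * e k l = if j = k then e i l else 0

/-- The (Schur) index of a central simple algebra `A` over `K`. -/
def brauerIndex (K A : Type*) [Field K] [Ring A] [Algebra K A] : ℕ :=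
  sInf {d | 0 < d ∧ HasMatrixUnits A (Nat.sqrt (Module.finrank K A) / d)}

/-- `V` is the valuation subring of `F` given by the height-one prime `(p)` of `R`. -/
def IsValuationAt (R : Type*) {F : Type*} [CommRing R] [Field F] [Algebra R F]
    (V : ValuationSubring F) (p : R) : Prop :=
  (∀ r : R, V.valuation (algebraMap R F r) ≤ 1) ∧
  (∀ r : R, V.valuation (algebraMap R F r) < 1 ↔ p ∣ r)

/-- The field extension `E/F` is unramified at the valuation subring `V` of `F`:
the integral closure of `V` in `E` is étale over `V`. -/
def ExtUnramifiedAt {F : Type u} (E : Type u) [Field F] [Field E] [Algebra F E]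
    (V : ValuationSubring F) : Prop :=
  letI : Algebra V E := ((algebraMap F E).comp V.subtype).toAlgebra
  Algebra.Etale V ↥(integralClosure V E)

/-- An Azumaya algebra over a (local) commutative ring: finite free with
central simple reduction. -/
def IsAzumayaOver (O B : Type*) [CommRing O] [IsLocalRing O] [Ring B] [Algebra O B] : Prop :=
  Module.Free O B ∧ Module.Finite O B ∧
    IsCSA (IsLocalRing.ResidueField O) ((IsLocalRing.ResidueField O) ⊗[O] B)

/-- A central simple algebra `A/F` is unramified at the valuation subring `V` of `F`:
it admits an Azumaya order over `V`. -/
def CSAUnramifiedAt {F : Type*} (A : Type*) [Field F] [Ring A] [Algebra F A]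
    (V : ValuationSubring F) : Prop :=
  letI : Algebra V A :=
    RingHom.toAlgebra' ((algebraMap F A).comp V.subtype)
      (fun c x => Algebra.commutes (V.subtype c) x)
  ∃ 𝒜 : Subalgebra V A, IsAzumayaOver V 𝒜 ∧
    ∀ a : A, ∃ x : 𝒜, ∃ c : V, c ≠ 0 ∧ (V.subtype c) • a = (x : A)

/-- `L` (a complete discretely valued field) is the completion of `F` at the discrete
valuation given by the prime element `p` of `R ⊆ F`. -/
structure IsCompletionAt (R F L : Type*) [CommRing R] [Field F]
    [Algebra R F] [Field L] [Algebra F L] [Valued L (WithZero (Multiplicative ℤ))] (p : R) :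
    Prop where
  complete : CompleteSpace L
  dense : DenseRange (algebraMap F L)
  le_one : ∀ r : R, Valued.v (algebraMap F L (algebraMap R F r)) ≤ 1
  lt_one_iff : ∀ r : R, Valued.v (algebraMap F L (algebraMap R F r)) < 1 ↔ p ∣ r
  uniformizer : Valued.v (algebraMap F L (algebraMap R F p)) =
    ((Multiplicative.ofAdd (-1 : ℤ) : Multiplicative ℤ) : WithZero (Multiplicative ℤ))

/-- `ν` is the reduced norm of the central simple algebra `A` over `K`: under any
splitting-field isomorphism it is computed by the determinant. -/
def IsReducedNorm (K : Type*) [Field K] (A : Type*) [Ring A] [Algebra K A] (ν : A → K) : Prop :=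
  ∀ (L : Type*) [Field L] [Algebra K L] (n : ℕ)
    (iso : (L ⊗[K] A) ≃ₐ[L] Matrix (Fin n) (Fin n) L) (a : A),
    algebraMap K L (ν a) = Matrix.det (iso ((1 : L) ⊗ₜ[K] a))

/-- `B` is (a model of) the cyclic algebra `(E, σ, a)` over `K`. -/
def IsCyclicAlgebra (K E : Type*) [Field K] [Field E] [Algebra K E]
    (σ : E ≃ₐ[K] E) (a : K) (B : Type*) [Ring B] [Algebra K B] : Prop :=
  IsCSA K B ∧ Module.finrank K B = (Module.finrank K E) ^ 2 ∧
  ∃ (ι : E →ₐ[K] B) (x : Bˣ),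
    (∀ e : E, (x : B) * ι e = ι (σ e) * (x : B)) ∧
    (x : B) ^ (Module.finrank K E) = algebraMap K B a

end
universe u

/-- The algebra structure on an `F`-algebra `A` over a subring `W` of `F`. -/
def subringAlg {F A : Type*} [Field F] [Ring A] [Algebra F A] (W : Subring F) :
    Algebra W A :=
  RingHom.toAlgebra' ((algebraMap F A).comp W.subtype)
    (fun c x => Algebra.commutes (W.subtype c : F) x)

/-- Azumaya algebra over a commutative ring: finite projective faithful with
central simple fibres at all maximal ideals. -/
def IsAzumayaAlg (O B : Type u) [CommRing O] [Ring B] [Algebra O B] : Prop :=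
  Module.Finite O B ∧ Module.Projective O B ∧ FaithfulSMul O B ∧
    ∀ m : Ideal O, ∀ hm : m.IsMaximal,
      letI := hm
      letI : Field (O ⧸ m) := Ideal.Quotient.field m
      IsCSA (O ⧸ m) ((O ⧸ m) ⊗[O] B)

open groupCohomology in
/-- Vanishing of continuous cohomology of the topological group `G` with coefficients in
finite discrete continuous modules, in all degrees `> q`. -/
def ContCohomVanishAbove (G : Type u) [Group G] [TopologicalSpace G] (q : ℕ) : Prop :=
  ∀ n : ℕ, q ≤ n → ∀ A : Rep.{u} (ULift.{u} ℤ) G, Finite A →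
    (∀ a : A, ∃ U : Subgroup G, IsOpen (U : Set G) ∧ ∀ g ∈ U, A.ρ g a = a) →
    ∀ f : (Fin (n + 1) → G) → A,
      (letI : TopologicalSpace A := ⊥; Continuous f) →
      (inhomogeneousCochains.d A (n + 1)).hom f = 0 →
      ∃ g : (Fin n → G) → A,
        (letI : TopologicalSpace A := ⊥; Continuous g) ∧ (inhomogeneousCochains.d A n).hom g = f

/-- The Galois cohomological dimension of a field `k` is at most `q` :
continuous cohomology of the absolute Galois group with finite discrete coefficients
vanishes in degrees `> q`. -/
def cohomDimLE (k : Type u) [Field k] (q : ℕ) : Prop :=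
  ContCohomVanishAbove (AlgebraicClosure k ≃ₐ[k] AlgebraicClosure k) q

/-!
Put `ρ = σ τ₁`; the dihedral relation makes `ρ` an involution with `ρ σ = τ₁`. Applying `ρ` to
`σ(a) ρ(b) = b a` and multiplying the two relations eliminates `b`: `σ(a) τ₁(a) = a ρ(a)`.
So `s = a / τ₁(a)` is fixed by `σ`, i.e. lies in `K`, and `s τ₁(s) = 1`. Since `τ₁` is the
nontrivial automorphism of `K/K₀`, Hilbert 90 gives `s = k / τ₁(k)` with `k ∈ K*`, and then
`a / k` is fixed by `τ₁`.
-/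

/-- The witness is `s + 1`, or `τ c - c` when `s = -1`. -/
theorem Subfield.exists_eq_div_map_of_mul_map_eq_one {L F : Type*} [Field L] [FunLike F L L]
    [RingHomClass F L L] {S : Subfield L} {τ : F} (hS : ∀ x ∈ S, τ x ∈ S)
    {c : L} (hcS : c ∈ S) (hτc : τ (τ c) = c) (hc : τ c ≠ c)
    {s : L} (hsS : s ∈ S) (hs : s * τ s = 1) :
    ∃ k ∈ S, k ≠ 0 ∧ s = k / τ k := by
  by_cases hs1 : s = -1
  · refine ⟨τ c - c, sub_mem (hS c hcS) hcS, sub_ne_zero.mpr hc, ?_⟩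
    have hne : c - τ c ≠ 0 := sub_ne_zero.mpr hc.symm
    rw [map_sub, hτc, hs1, eq_div_iff hne]
    ring
  · have hs1' : s + 1 ≠ 0 := fun h => hs1 (eq_neg_of_add_eq_zero_left h)
    have hmul : s * (τ s + 1) = s + 1 := by linear_combination hs
    refine ⟨s + 1, add_mem hsS (one_mem S), hs1', ?_⟩
    rw [map_add, map_one, eq_div_iff (right_ne_zero_of_mul (hmul ▸ hs1'))]
    exact hmul

section Dihedral

variable {R L : Type*} [CommRing R] [Field L] [Algebra R L] {σ τ : L ≃ₐ[R] L}

theorem AlgEquiv.map_eq_self_of_mem_zpowers {g h : L ≃ₐ[R] L} (hh : h ∈ Subgroup.zpowers g)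
    {x : L} (hx : g x = x) : h x = x :=
  Subgroup.zpowers_le.mpr (show g ∈ MulAction.stabilizer _ x from hx) hh

theorem AlgEquiv.map_map_eq_self_of_map_eq_self (hrel : σ * τ = τ * σ⁻¹) {x : L}
    (hx : σ x = x) : σ (τ x) = τ x := by
  have hσinv : σ⁻¹ x = x := by rw [AlgEquiv.aut_inv, AlgEquiv.symm_apply_eq, hx]
  simpa [hσinv] using DFunLike.congr_fun hrel x

theorem AlgEquiv.mul_map_eq_mul_map_of_dihedral (hτ : τ * τ = 1) (hrel : σ * τ = τ * σ⁻¹)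
    {a b : L} (ha : a ≠ 0) (hb : b ≠ 0) (hab : σ a * a⁻¹ = b * ((σ * τ) b)⁻¹) :
    σ a * τ a = a * (σ * τ) a := by
  set ρ := σ * τ
  have hρσ : ρ * σ = τ := by rw [hrel]; group
  have hρρ : ρ * ρ = 1 := by rw [show ρ * ρ = ρ * σ * τ from mul_assoc .., hρσ, hτ]
  have hρb : ρ b ≠ 0 := (map_ne_zero ρ).mpr hb
  have h₁ : σ a * ρ b = b * a := by
    field_simp at hab
    linear_combination hab
  have h₂ : τ a * b = ρ b * ρ a := by
    have h := congrArg ρ h₁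
    rwa [map_mul, map_mul, ← AlgEquiv.mul_apply, ← AlgEquiv.mul_apply, hρσ, hρρ,
      AlgEquiv.one_apply] at h
  refine mul_right_cancel₀ hb ?_
  linear_combination σ a * h₂ + ρ a * h₁

theorem AlgEquiv.map_div_map_eq_of_dihedral (hτ : τ * τ = 1) (hrel : σ * τ = τ * σ⁻¹)
    {a b : L} (ha : a ≠ 0) (hb : b ≠ 0) (hab : σ a * a⁻¹ = b * ((σ * τ) b)⁻¹) :
    σ (a / τ a) = a / τ a := by
  have key := mul_map_eq_mul_map_of_dihedral hτ hrel ha hb hab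
  have hτa : τ a ≠ 0 := (map_ne_zero τ).mpr ha
  have hρa : (σ * τ) a ≠ 0 := (map_ne_zero _).mpr ha
  rw [map_div₀, ← AlgEquiv.mul_apply, div_eq_div_iff hρa hτa]
  linear_combination key

end Dihedral

theorem statement_1_general (K₀ K L : Type u) [Field K₀] [Field K] [Field L]
    [Algebra K₀ K] [Algebra K₀ L] [Algebra K L] [IsScalarTower K₀ K L]
    [IsGalois K L]
    (σ : L ≃ₐ[K] L) (hσ : ∀ g : L ≃ₐ[K] L, g ∈ Subgroup.zpowers σ)
    (τ₁ : L ≃ₐ[K₀] L) (hτ₁sq : τ₁ * τ₁ = 1)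
    (hτ₁K : ∃ c : K, τ₁ (algebraMap K L c) ≠ algebraMap K L c)
    (hrel : (σ.restrictScalars K₀) * τ₁ = τ₁ * (σ.restrictScalars K₀)⁻¹)
    (a b : L) (ha : a ≠ 0) (hb : b ≠ 0)
    (hab : σ a * a⁻¹ = b * (((σ.restrictScalars K₀) * τ₁) b)⁻¹) :
    ∃ (k : K) (l : L), l ∈ IntermediateField.fixedField (Subgroup.zpowers τ₁) ∧
      a = algebraMap K L k * l := by
  set σ₀ := σ.restrictScalars K₀
  have hτ₁τ₁ : ∀ x, τ₁ (τ₁ x) = x := fun x => by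
    simpa using DFunLike.congr_fun hτ₁sq x
  have mem_K : ∀ x, σ x = x → x ∈ (algebraMap K L).fieldRange := fun x hx =>
    (InfiniteGalois.mem_range_algebraMap_iff_fixed x).mpr
      fun g => AlgEquiv.map_eq_self_of_mem_zpowers (hσ g) hx
  have hτ₁S : ∀ x ∈ (algebraMap K L).fieldRange, τ₁ x ∈ (algebraMap K L).fieldRange := by
    rintro _ ⟨c, rfl⟩
    exact mem_K _ (AlgEquiv.map_map_eq_self_of_map_eq_self (σ := σ₀) hrel (σ.commutes c))
  obtain ⟨c, hc⟩ := hτ₁K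
  have hτa : τ₁ a ≠ 0 := (map_ne_zero τ₁).mpr ha
  have hnorm : a / τ₁ a * τ₁ (a / τ₁ a) = 1 := by
    rw [map_div₀, hτ₁τ₁]
    field_simp
  obtain ⟨_, ⟨k, rfl⟩, hk, hs⟩ := Subfield.exists_eq_div_map_of_mul_map_eq_one hτ₁S
    (RingHom.mem_fieldRange_self _ c) (hτ₁τ₁ _) hc
    (mem_K _ (AlgEquiv.map_div_map_eq_of_dihedral (σ := σ₀) hτ₁sq hrel ha hb hab)) hnorm
  refine ⟨k, a / algebraMap K L k, ?_, by field_simp⟩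
  refine (IntermediateField.mem_fixedField_iff _ _).mpr fun g hg =>
    AlgEquiv.map_eq_self_of_mem_zpowers hg ?_
  have hτk : τ₁ (algebraMap K L k) ≠ 0 := (map_ne_zero τ₁).mpr hk
  rw [map_div₀, div_eq_div_iff hτk hk]
  rw [div_eq_div_iff hτa hτk] at hs
  linear_combination -hs

theorem statement_1 (K₀ K L : Type u) [Field K₀] [Field K] [Field L]
    [Algebra K₀ K] [Algebra K₀ L] [Algebra K L] [IsScalarTower K₀ K L]
    (hquad : Module.finrank K₀ K = 2)
    [FiniteDimensional K₀ L] [IsGalois K₀ L] [IsGalois K L]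
    (σ : L ≃ₐ[K] L) (hσ : ∀ g : L ≃ₐ[K] L, g ∈ Subgroup.zpowers σ)
    (τ₁ : L ≃ₐ[K₀] L) (hτ₁sq : τ₁ * τ₁ = 1) (hτ₁ne : τ₁ ≠ 1)
    (hτ₁K : ∃ c : K, τ₁ (algebraMap K L c) ≠ algebraMap K L c)
    (hrel : (σ.restrictScalars K₀) * τ₁ = τ₁ * (σ.restrictScalars K₀)⁻¹)
    (a b : L) (ha : a ≠ 0) (hb : b ≠ 0)
    (hab : σ a * a⁻¹ = b * (((σ.restrictScalars K₀) * τ₁) b)⁻¹) :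
    ∃ (k : K) (l : L), l ∈ IntermediateField.fixedField (Subgroup.zpowers τ₁) ∧
      a = algebraMap K L k * l :=
  statement_1_general K₀ K L σ hσ τ₁ hτ₁sq hτ₁K hrel a b ha hb hab
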